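/- arXiv:2507.14126 — 3 statements merged into one kernel-verified Lean document; each statement's English description precedes it below -/
import Mathlib

section
/- Let E_1, …, E_K be finite-dimensional real inner product spaces, and for each k let f_k : E_k → ℝ be differentiable and L_k-smooth, h_k : E_k → ℝ be differentiable, and ρ_k > 0. Define the multi-block augmented Lagrangian L({x_k}, {y_k}, {μ_k}) = Σ_{k=1}^K [ f_k(x_k) + h_k(y_k) + ⟨μ_k, x_k − y_k⟩ + (ρ_k/2)‖x_k − y_k‖² ]. Suppose at every iteration t: (i) for each k, the map y_k ↦ L({x_k^t}, …, y_k, …, {μ_k^t}) is γ̃_k-strongly convex and y_k^{t+1} is its minimizer; (ii) for each k, the map x_k ↦ L(…, x_k, …, {y_k^{t+1}}, {μ_k^t}) is γ_k-strongly convex and x_k^{t+1} is its minimizer, so that ∇f_k(x_k^{t+1}) + μ_k^t + ρ_k(x_k^{t+1} − y_k^{t+1}) = 0; (iii) μ_k^{t+1} = μ_k^t + ρ_k(x_k^{t+1} − y_k^{t+1}). Then for every t ≥ 1, L({x_k^{t+1}}, {y_k^{t+1}}, {μ_k^{t+1}}) − L({x_k^t}, {y_k^t}, {μ_k^t}) ≤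 Σ_{k=1}^K [ (L_k²/ρ_k − γ_k/2)‖x_k^{t+1} − x_k^t‖² − (γ̃_k/2)‖y_k^{t+1} − y_k^t‖² ]. -/
/-!
Split the change of the augmented Lagrangian into the `y`-update, the `x`-update and the dual
update. A function that is `m`-strongly convex exceeds its minimum at distance `r` from the
minimizer by at least `m / 2 * r ^ 2`, so the two primal updates decrease `L` by at least
`γ'_k / 2 * ‖Δy_k‖ ^ 2` and `γ_k / 2 * ‖Δx_k‖ ^ 2`. The dual update increases `L` by
`⟪Δμ_k, x_k - y_k⟫ = ‖Δμ_k‖ ^ 2 / ρ_k`; the optimality condition and the dual update give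
`μ_k^t = -∇f_k(x_k^t)` for `t ≥ 1`, so `Δμ_k` is a difference of gradients and smoothness
bounds the increase by `L_k ^ 2 / ρ_k * ‖Δx_k‖ ^ 2`.
-/

open scoped RealInnerProductSpace

open Finset Function Set

theorem StrongConvexOn.add_mul_norm_sub_sq_le_of_isMinOn {E : Type*} [NormedAddCommGroup E]
    [NormedSpace ℝ E] {s : Set E} {m : ℝ} {f : E → ℝ} (hf : StrongConvexOn s m f) {w z : E}
    (hmin : IsMinOn f s w) (hw : w ∈ s) (hz : z ∈ s) :
    f w + m / 2 * ‖z - w‖ ^ 2 ≤ f z := by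
  set c := m / 2 * ‖z - w‖ ^ 2
  -- compare `f w` with `f` at `(1 - a) • w + a • z` and let `a → 0⁺`
  have hseg : ∀ a ∈ Ioo (0 : ℝ) 1, f w + (1 - a) * c ≤ f z := by
    rintro a ⟨ha₀, ha₁⟩
    have hconv : f ((1 - a) • w + a • z) ≤ (1 - a) * f w + a * f z - (1 - a) * a * c := by
      simpa only [smul_eq_mul, norm_sub_rev w z]
        using hf.2 hw hz (sub_nonneg.2 ha₁.le) ha₀.le (sub_add_cancel 1 a)
    have hle : f w ≤ f _ := hmin (hf.1 hw hz (sub_nonneg.2 ha₁.le) ha₀.le (sub_add_cancel 1 a))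
    nlinarith
  have hlim : Filter.Tendsto (fun a : ℝ => f w + (1 - a) * c) (nhdsWithin 0 (Ioi 0))
      (nhds (f w + c)) := by
    have hcont : ContinuousAt (fun a : ℝ => f w + (1 - a) * c) 0 := by fun_prop
    simpa using hcont.tendsto.mono_left nhdsWithin_le_nhds
  exact le_of_tendsto hlim (Filter.mem_of_superset (Ioo_mem_nhdsGT one_pos) hseg)

theorem Fintype.sum_apply_update_sub {ι : Type*} [Fintype ι] [DecidableEq ι] {E : ι → Type*}
    (G : ∀ i, E i → ℝ) (v : ∀ i, E i) (i : ι) (z : E i) :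
    ∑ j, G j (update v i z j) - ∑ j, G j (v j) = G i z - G i (v i) := by
  simp_rw [apply_update G v i z]
  rw [sum_update_of_mem (mem_univ i), sum_eq_add_sum_sdiff_singleton_of_mem (mem_univ i)]
  ring

theorem StrongConvexOn.apply_add_mul_norm_sub_sq_le_of_isMinOn_update {ι : Type*} [Fintype ι]
    [DecidableEq ι] {E : ι → Type*} [∀ i, NormedAddCommGroup (E i)] [∀ i, NormedSpace ℝ (E i)]
    {G : ∀ i, E i → ℝ} {m : ℝ} {v : ∀ i, E i} {i : ι} {w : E i}
    (hf : StrongConvexOn univ m fun z => ∑ j, G j (update v i z j))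
    (hmin : IsMinOn (fun z => ∑ j, G j (update v i z j)) univ w) :
    G i w + m / 2 * ‖w - v i‖ ^ 2 ≤ G i (v i) := by
  have := hf.add_mul_norm_sub_sq_le_of_isMinOn hmin (mem_univ w) (mem_univ (v i))
  have hw := Fintype.sum_apply_update_sub G v i w
  simp only [update_eq_self, norm_sub_rev (v i)] at this
  linarith

theorem inner_le_sq_div_of_smul_eq {F : Type*} [NormedAddCommGroup F] [InnerProductSpace ℝ F]
    {ρ C : ℝ} {u d : F} (hρ : 0 < ρ) (hd : ρ • d = u) (hu : ‖u‖ ≤ C) :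
    ⟪u, d⟫ ≤ C ^ 2 / ρ := by
  have hnorm : ‖u‖ = ρ * ‖d‖ := by rw [← hd, norm_smul, Real.norm_of_nonneg hρ.le]
  rw [le_div_iff₀ hρ, ← hd, real_inner_smul_left, real_inner_self_eq_norm_sq]
  calc ρ * ‖d‖ ^ 2 * ρ = ‖u‖ ^ 2 := by rw [hnorm]; ring
    _ ≤ C ^ 2 := pow_le_pow_left₀ (norm_nonneg u) hu 2

noncomputable def augLagSummand {F : Type*} [NormedAddCommGroup F] [InnerProductSpace ℝ F]
    (f h : F → ℝ) (ρ : ℝ) (a b μ : F) : ℝ :=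
  f a + h b + ⟪μ, a - b⟫ + ρ / 2 * ‖a - b‖ ^ 2

theorem augLagSummand_sub_le_of_dual_update {F : Type*} [NormedAddCommGroup F]
    [InnerProductSpace ℝ F] (f h : F → ℝ) {ρ C : ℝ} {a b μ μ' : F} (hρ : 0 < ρ)
    (hμ' : μ' = μ + ρ • (a - b)) (hC : ‖μ' - μ‖ ≤ C) :
    augLagSummand f h ρ a b μ' - augLagSummand f h ρ a b μ ≤ C ^ 2 / ρ := by
  have := inner_le_sq_div_of_smul_eq hρ (by rw [hμ']; abel) hC
  rw [inner_sub_left] at this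
  unfold augLagSummand
  linarith

theorem stmt3_general {K : ℕ} (E : Fin K → Type*)
    [∀ k, NormedAddCommGroup (E k)] [∀ k, InnerProductSpace ℝ (E k)]
    [∀ k, FiniteDimensional ℝ (E k)]
    (f h : ∀ k, E k → ℝ) (L ρ γ γ' : Fin K → ℝ)
    (hsmooth : ∀ k, ∀ a a' : E k,
      ‖gradient (f k) a - gradient (f k) a'‖ ≤ L k * ‖a - a'‖)
    (hρ : ∀ k, 0 < ρ k)
    (Lag : (∀ k, E k) → (∀ k, E k) → (∀ k, E k) → ℝ)
    (hLag : ∀ x y μ, Lag x y μ =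
      ∑ k, (f k (x k) + h k (y k) + ⟪μ k, x k - y k⟫ + (ρ k / 2) * ‖x k - y k‖ ^ 2))
    (x y μ : ℕ → ∀ k, E k)
    -- (i) each `y_k`-subproblem is `γ'_k`-strongly convex and `y_k^{t+1}` minimizes it
    (hyconv : ∀ (t : ℕ) (k : Fin K), ConvexOn ℝ Set.univ
      (fun z : E k => Lag (x t) (Function.update (y t) k z) (μ t) - (γ' k / 2) * ‖z‖ ^ 2))
    (hymin : ∀ (t : ℕ) (k : Fin K), ∀ z : E k,
      Lag (x t) (Function.update (y t) k (y (t + 1) k)) (μ t) ≤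
        Lag (x t) (Function.update (y t) k z) (μ t))
    -- (ii) each `x_k`-subproblem is `γ_k`-strongly convex, `x_k^{t+1}` minimizes it,
    -- so that the first-order optimality condition holds
    (hxconv : ∀ (t : ℕ) (k : Fin K), ConvexOn ℝ Set.univ
      (fun z : E k => Lag (Function.update (x t) k z) (y (t + 1)) (μ t)
        - (γ k / 2) * ‖z‖ ^ 2))
    (hxmin : ∀ (t : ℕ) (k : Fin K), ∀ z : E k,
      Lag (Function.update (x t) k (x (t + 1) k)) (y (t + 1)) (μ t) ≤
        Lag (Function.update (x t) k z) (y (t + 1)) (μ t))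
    (hopt : ∀ (t : ℕ) (k : Fin K), gradient (f k) (x (t + 1) k) + μ t k
        + ρ k • (x (t + 1) k - y (t + 1) k) = 0)
    -- (iii) dual updates
    (hdual : ∀ (t : ℕ) (k : Fin K),
      μ (t + 1) k = μ t k + ρ k • (x (t + 1) k - y (t + 1) k)) :
    ∀ t : ℕ, 1 ≤ t →
      Lag (x (t + 1)) (y (t + 1)) (μ (t + 1)) - Lag (x t) (y t) (μ t) ≤
        ∑ k, ((L k ^ 2 / ρ k - γ k / 2) * ‖x (t + 1) k - x t k‖ ^ 2
          - (γ' k / 2) * ‖y (t + 1) k - y t k‖ ^ 2) := by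
  intro t ht
  have hLag' : ∀ x y μ, Lag x y μ = ∑ k, augLagSummand (f k) (h k) (ρ k) (x k) (y k) (μ k) :=
    hLag
  have hμ : ∀ r, 1 ≤ r → ∀ k, μ r k = -gradient (f k) (x r k) := by
    rintro (_ | r) hr k
    · omega
    rw [hdual]
    linear_combination (norm := module) hopt r k
  have hx : ∀ k, augLagSummand (f k) (h k) (ρ k) (x (t + 1) k) (y (t + 1) k) (μ t k)
      + γ k / 2 * ‖x (t + 1) k - x t k‖ ^ 2
      ≤ augLagSummand (f k) (h k) (ρ k) (x t k) (y (t + 1) k) (μ t k) := fun k =>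
    StrongConvexOn.apply_add_mul_norm_sub_sq_le_of_isMinOn_update
      (G := fun j a => augLagSummand (f j) (h j) (ρ j) a (y (t + 1) j) (μ t j))
      (strongConvexOn_iff_convex.2 (by simpa only [hLag'] using hxconv t k))
      (isMinOn_univ_iff.2 (by simpa only [hLag'] using hxmin t k))
  have hy : ∀ k, augLagSummand (f k) (h k) (ρ k) (x t k) (y (t + 1) k) (μ t k)
      + γ' k / 2 * ‖y (t + 1) k - y t k‖ ^ 2
      ≤ augLagSummand (f k) (h k) (ρ k) (x t k) (y t k) (μ t k) := fun k =>
    StrongConvexOn.apply_add_mul_norm_sub_sq_le_of_isMinOn_update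
      (G := fun j b => augLagSummand (f j) (h j) (ρ j) (x t j) b (μ t j))
      (strongConvexOn_iff_convex.2 (by simpa only [hLag'] using hyconv t k))
      (isMinOn_univ_iff.2 (by simpa only [hLag'] using hymin t k))
  have hμ_step : ∀ k, augLagSummand (f k) (h k) (ρ k) (x (t + 1) k) (y (t + 1) k) (μ (t + 1) k)
      - augLagSummand (f k) (h k) (ρ k) (x (t + 1) k) (y (t + 1) k) (μ t k)
      ≤ L k ^ 2 / ρ k * ‖x (t + 1) k - x t k‖ ^ 2 := fun k => by
    refine (augLagSummand_sub_le_of_dual_update _ _ (C := L k * ‖x (t + 1) k - x t k‖) (hρ k)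
      (hdual t k) ?_).trans_eq (by ring)
    rw [hμ t ht, hμ (t + 1) (by omega), neg_sub_neg, norm_sub_rev (x _ k)]
    exact hsmooth k _ _
  rw [hLag', hLag', ← sum_sub_distrib]
  exact sum_le_sum fun k _ => by linarith [hx k, hy k, hμ_step k]

/-- One-step descent estimate for the multi-block augmented Lagrangian
`L({x_k},{y_k},{μ_k}) = Σ_k [f_k(x_k) + h_k(y_k) + ⟪μ_k, x_k − y_k⟫ + (ρ_k/2)‖x_k − y_k‖²]`
under exact strongly convex block minimizations and the dual updates. -/
theorem stmt3 {K : ℕ} (E : Fin K → Type*)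
    [∀ k, NormedAddCommGroup (E k)] [∀ k, InnerProductSpace ℝ (E k)]
    [∀ k, FiniteDimensional ℝ (E k)]
    (f h : ∀ k, E k → ℝ) (L ρ γ γ' : Fin K → ℝ)
    (hdiff : ∀ k, Differentiable ℝ (f k))
    (hsmooth : ∀ k, ∀ a a' : E k,
      ‖gradient (f k) a - gradient (f k) a'‖ ≤ L k * ‖a - a'‖)
    (hdiffh : ∀ k, Differentiable ℝ (h k))
    (hρ : ∀ k, 0 < ρ k)
    (Lag : (∀ k, E k) → (∀ k, E k) → (∀ k, E k) → ℝ)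
    (hLag : ∀ x y μ, Lag x y μ =
      ∑ k, (f k (x k) + h k (y k) + ⟪μ k, x k - y k⟫ + (ρ k / 2) * ‖x k - y k‖ ^ 2))
    (x y μ : ℕ → ∀ k, E k)
    -- (i) each `y_k`-subproblem is `γ'_k`-strongly convex and `y_k^{t+1}` minimizes it
    (hyconv : ∀ (t : ℕ) (k : Fin K), ConvexOn ℝ Set.univ
      (fun z : E k => Lag (x t) (Function.update (y t) k z) (μ t) - (γ' k / 2) * ‖z‖ ^ 2))
    (hymin : ∀ (t : ℕ) (k : Fin K), ∀ z : E k,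
      Lag (x t) (Function.update (y t) k (y (t + 1) k)) (μ t) ≤
        Lag (x t) (Function.update (y t) k z) (μ t))
    -- (ii) each `x_k`-subproblem is `γ_k`-strongly convex, `x_k^{t+1}` minimizes it,
    -- so that the first-order optimality condition holds
    (hxconv : ∀ (t : ℕ) (k : Fin K), ConvexOn ℝ Set.univ
      (fun z : E k => Lag (Function.update (x t) k z) (y (t + 1)) (μ t)
        - (γ k / 2) * ‖z‖ ^ 2))
    (hxmin : ∀ (t : ℕ) (k : Fin K), ∀ z : E k,
      Lag (Function.update (x t) k (x (t + 1) k)) (y (t + 1)) (μ t) ≤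
        Lag (Function.update (x t) k z) (y (t + 1)) (μ t))
    (hopt : ∀ (t : ℕ) (k : Fin K), gradient (f k) (x (t + 1) k) + μ t k
        + ρ k • (x (t + 1) k - y (t + 1) k) = 0)
    -- (iii) dual updates
    (hdual : ∀ (t : ℕ) (k : Fin K),
      μ (t + 1) k = μ t k + ρ k • (x (t + 1) k - y (t + 1) k)) :
    ∀ t : ℕ, 1 ≤ t →
      Lag (x (t + 1)) (y (t + 1)) (μ (t + 1)) - Lag (x t) (y t) (μ t) ≤
        ∑ k, ((L k ^ 2 / ρ k - γ k / 2) * ‖x (t + 1) k - x t k‖ ^ 2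
          - (γ' k / 2) * ‖y (t + 1) k - y t k‖ ^ 2) :=
  stmt3_general E f h L ρ γ γ' hsmooth hρ Lag hLag x y μ hyconv hymin hxconv hxmin hopt hdual
end

section
/- In the setting of the multi-block augmented Lagrangian with K blocks, suppose that for each k: f_k is differentiable and L_k-smooth; h_k is differentiable; f_k + h_k is bounded below on E_k; ρ_k ≥ L_k; the per-iteration hypotheses hold at every t (namely each y_k-update exactly minimizes a γ̃_k-strongly convex subproblem with γ̃_k ≥ 0, each x_k-update exactly minimizes a γ_k-strongly convex subproblem so that ∇f_k(x_k^{t+1}) + μ_k^t + ρ_k(x_k^{t+1} − y_k^{t+1}) = 0, and μ_k^{t+1} = μ_k^t + ρ_k(x_k^{t+1} − y_k^{t+1})); and ρ_k γ_k ≥ 2 L_k². Then the sequence 𝐋^t = L({x_k^t}, {y_k^t}, {μ_k^t}) is monotonically decreasing (for t ≥ 1), bounded below by a finite constant, and therefore convergent: lim_{t→∞} 𝐋^t = 𝐋* > −∞. -/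
open scoped RealInnerProductSpace
open Filter Set Function Topology

/-!
Along one sweep the `y`-updates cannot increase `𝐋`, the `x`-updates decrease it by
`∑ γ_k / 2 ‖Δx_k‖²` (strong convexity at an exact minimiser), and the dual update increases it by
`∑ ρ_k ‖x_k - y_k‖² = ∑ ‖Δμ_k‖² / ρ_k`. From the second iterate on, the optimality condition reads
`μ_k = -∇f_k(x_k)`, so `‖Δμ_k‖ ≤ L_k ‖Δx_k‖`, and `ρ_k γ_k ≥ 2 L_k²` makes the net change
nonpositive. The same identity, the descent lemma for `L_k`-smooth `f_k` and `ρ_k ≥ L_k` bound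
each block of `𝐋` below by `f_k(y_k) + h_k(y_k)`; a monotone bounded sequence converges.
-/

lemma le_of_forall_one_sub_mul_le {c d : ℝ} (h : ∀ a ∈ Ioo (0 : ℝ) 1, (1 - a) * c ≤ d) :
    c ≤ d := by
  have hlim : Tendsto (fun a : ℝ => (1 - a) * c) (𝓝[>] 0) (𝓝 c) := by
    have hcont : Continuous fun a : ℝ => (1 - a) * c := by fun_prop
    simpa using (hcont.tendsto 0).mono_left nhdsWithin_le_nhds
  exact le_of_tendsto hlim (eventually_of_mem (Ioo_mem_nhdsGT one_pos) h)

lemma Fintype.sum_apply_update_add {ι β : Type*} [Fintype ι] [DecidableEq ι] [AddCommGroup β]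
    {M : ι → Type*} (g : ∀ i, M i → β) (y : ∀ i, M i) (k : ι) (z : M k) :
    ∑ i, g i (update y k z i) + g k (y k) = ∑ i, g i (y i) + g k z := by
  simp_rw [apply_update g y k z]
  rw [Finset.sum_update_of_mem (Finset.mem_univ k),
    Finset.sum_eq_add_sum_sdiff_singleton_of_mem (Finset.mem_univ k) (fun i => g i (y i))]
  abel

lemma Fintype.sum_add_sum_le_of_forall_update {ι : Type*} [Fintype ι] [DecidableEq ι]
    {M : ι → Type*} (g : ∀ i, M i → ℝ) (c : ι → ℝ) {y y' : ∀ i, M i}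
    (h : ∀ k, ∑ i, g i (update y k (y' k) i) + c k ≤ ∑ i, g i (y i)) :
    ∑ i, g i (y' i) + ∑ i, c i ≤ ∑ i, g i (y i) := by
  rw [← Finset.sum_add_distrib]
  refine Finset.sum_le_sum fun k _ => ?_
  linarith [h k, Fintype.sum_apply_update_add g y k (y' k)]

section InnerProductSpace
variable {E : Type*} [NormedAddCommGroup E] [InnerProductSpace ℝ E]

lemma StrongConvexOn.add_sq_norm_sub_le_of_isMinOn {s : Set E} {γ : ℝ} {φ : E → ℝ} {m z : E}
    (hφ : StrongConvexOn s γ φ) (hm : IsMinOn φ s m) (hms : m ∈ s) (hz : z ∈ s) :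
    φ m + γ / 2 * ‖z - m‖ ^ 2 ≤ φ z := by
  suffices ∀ a ∈ Ioo (0 : ℝ) 1, (1 - a) * (γ / 2 * ‖z - m‖ ^ 2) ≤ φ z - φ m by
    linarith [le_of_forall_one_sub_mul_le this]
  rintro a ⟨ha0, ha1⟩
  have hb : 0 ≤ 1 - a := sub_nonneg.2 ha1.le
  have hconv := hφ.2 hz hms ha0.le hb (add_sub_cancel a 1)
  have hmin := isMinOn_iff.1 hm _ (hφ.1 hz hms ha0.le hb (add_sub_cancel a 1))
  simp only [smul_eq_mul] at hconv
  have : a * ((1 - a) * (γ / 2 * ‖z - m‖ ^ 2)) ≤ a * (φ z - φ m) := by linarith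
  exact le_of_mul_le_mul_left this ha0

lemma Differentiable.apply_le_add_inner_gradient_add_sq [CompleteSpace E] {f : E → ℝ} {L : ℝ}
    (hf : Differentiable ℝ f) (hL : ∀ a b, ‖gradient f a - gradient f b‖ ≤ L * ‖a - b‖)
    (x y : E) : f y ≤ f x + ⟪gradient f x, y - x⟫ + L / 2 * ‖y - x‖ ^ 2 := by
  set d := y - x
  set g : ℝ → ℝ := fun s => f (x + s • d) - s * ⟪gradient f x, d⟫ - L / 2 * s ^ 2 * ‖d‖ ^ 2
  have hg : ∀ s : ℝ, HasDerivAt g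
      (⟪gradient f (x + s • d), d⟫ - ⟪gradient f x, d⟫ - L * s * ‖d‖ ^ 2) s := by
    intro s
    have hline : HasDerivAt (fun s : ℝ => x + s • d) d s := by
      simpa using ((hasDerivAt_id s).smul_const d).const_add x
    have hfline := (hf (x + s • d)).hasFDerivAt.comp_hasDerivAt s hline
    rw [← inner_gradient_left] at hfline
    refine ((hfline.sub ((hasDerivAt_id s).mul_const ⟪gradient f x, d⟫)).sub
      (((hasDerivAt_pow 2 s).const_mul (L / 2)).mul_const (‖d‖ ^ 2))).congr_deriv ?_
    rw [show (2 - 1 : ℕ) = 1 from rfl]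
    push_cast
    ring
  have hg_anti : AntitoneOn g (Icc 0 1) := by
    refine antitoneOn_of_deriv_nonpos (convex_Icc 0 1)
      (fun s _ => (hg s).continuousAt.continuousWithinAt)
      (fun s _ => (hg s).differentiableAt.differentiableWithinAt) ?_
    rw [interior_Icc]
    rintro s ⟨hs0, -⟩
    have hgrad : ‖gradient f (x + s • d) - gradient f x‖ ≤ L * (s * ‖d‖) := by
      simpa [norm_smul, abs_of_pos hs0] using hL (x + s • d) x
    have hcs := real_inner_le_norm (gradient f (x + s • d) - gradient f x) d
    rw [inner_sub_left] at hcs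
    rw [(hg s).deriv]
    nlinarith [mul_le_mul_of_nonneg_right hgrad (norm_nonneg d)]
  have h01 := hg_anti (left_mem_Icc.2 zero_le_one) (right_mem_Icc.2 zero_le_one) zero_le_one
  have hxy : x + d = y := add_sub_cancel x y
  simp only [g, one_smul, zero_smul, add_zero, zero_mul, one_pow, mul_one, one_mul, sub_zero,
    ne_eq, OfNat.ofNat_ne_zero, not_false_eq_true, zero_pow, mul_zero, hxy] at h01
  linarith

end InnerProductSpace

lemma mul_sq_le_of_mul_le {ρ L γ A B : ℝ} (hρ : 0 < ρ) (hA : 0 ≤ A) (hAB : ρ * A ≤ L * B)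
    (hργ : 2 * L ^ 2 ≤ ρ * γ) : ρ * A ^ 2 ≤ γ / 2 * B ^ 2 := by
  have hsq : (ρ * A) ^ 2 ≤ (L * B) ^ 2 := pow_le_pow_left₀ (by positivity) hAB 2
  have : ρ * (ρ * A ^ 2) ≤ ρ * (γ / 2 * B ^ 2) := by
    nlinarith [mul_le_mul_of_nonneg_right hργ (sq_nonneg B)]
  exact le_of_mul_le_mul_left this hρ

lemma exists_tendsto_of_eventually_antitone_of_bddBelow {u : ℕ → ℝ} {N : ℕ} {B : ℝ}
    (hmono : ∀ t, N ≤ t → u (t + 1) ≤ u t) (hB : ∀ t, N ≤ t → B ≤ u t) :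
    ∃ l, Tendsto u atTop (𝓝 l) := by
  have hanti : Antitone fun n => u (n + N) :=
    antitone_nat_of_succ_le fun n => by simpa [add_right_comm] using hmono (n + N) le_add_self
  have hbdd : BddBelow (range fun n => u (n + N)) := by
    refine ⟨B, ?_⟩
    rintro _ ⟨n, rfl⟩
    exact hB _ le_add_self
  exact ⟨_, (tendsto_add_atTop_iff_nat N).1 (tendsto_atTop_ciInf hanti hbdd)⟩

section AugmentedLagrangian
variable {E : Type*} [NormedAddCommGroup E] [InnerProductSpace ℝ E]

noncomputable def augLagBlock (f h : E → ℝ) (ρ : ℝ) (a b μ : E) : ℝ :=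
  f a + h b + ⟪μ, a - b⟫ + ρ / 2 * ‖a - b‖ ^ 2

lemma augLagBlock_dual_update (f h : E → ℝ) (ρ : ℝ) (a b μ : E) :
    augLagBlock f h ρ a b (μ + ρ • (a - b)) = augLagBlock f h ρ a b μ + ρ * ‖a - b‖ ^ 2 := by
  simp only [augLagBlock, inner_add_left, real_inner_smul_left, real_inner_self_eq_norm_sq]
  ring

lemma le_augLagBlock_neg_gradient [CompleteSpace E] {f : E → ℝ} {L ρ : ℝ}
    (hf : Differentiable ℝ f) (hL : ∀ a b, ‖gradient f a - gradient f b‖ ≤ L * ‖a - b‖)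
    (hLρ : L ≤ ρ) (h : E → ℝ) (a b : E) :
    f b + h b ≤ augLagBlock f h ρ a b (-gradient f a) := by
  have hdesc := hf.apply_le_add_inner_gradient_add_sq hL a b
  rw [← neg_sub a b, inner_neg_right, norm_neg] at hdesc
  have : L / 2 * ‖a - b‖ ^ 2 ≤ ρ / 2 * ‖a - b‖ ^ 2 := by gcongr
  simp only [augLagBlock, inner_neg_left]
  linarith

end AugmentedLagrangian

section MultiBlock
variable {ι : Type*} [Fintype ι] {E : ι → Type*}
  [∀ k, NormedAddCommGroup (E k)] [∀ k, InnerProductSpace ℝ (E k)]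
  (f h : ∀ k, E k → ℝ) (ρ : ι → ℝ)

noncomputable def augLag (x y μ : ∀ k, E k) : ℝ :=
  ∑ k, augLagBlock (f k) (h k) (ρ k) (x k) (y k) (μ k)

variable {f h ρ}

lemma augLag_dual_update (x y μ : ∀ k, E k) :
    augLag f h ρ x y (fun k => μ k + ρ k • (x k - y k)) =
      augLag f h ρ x y μ + ∑ k, ρ k * ‖x k - y k‖ ^ 2 := by
  simp only [augLag, augLagBlock_dual_update, Finset.sum_add_distrib]

variable [DecidableEq ι]

lemma augLag_le_of_forall_update_y {x y y' μ : ∀ k, E k}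
    (hmin : ∀ k z, augLag f h ρ x (update y k (y' k)) μ ≤ augLag f h ρ x (update y k z) μ) :
    augLag f h ρ x y' μ ≤ augLag f h ρ x y μ := by
  unfold augLag at hmin ⊢
  simpa using Fintype.sum_add_sum_le_of_forall_update
    (fun k b => augLagBlock (f k) (h k) (ρ k) (x k) b (μ k)) 0
    fun k => by simpa using hmin k (y k)

lemma augLag_add_le_of_forall_update_x {γ : ι → ℝ} {x x' y μ : ∀ k, E k}
    (hconv : ∀ k, ConvexOn ℝ univ
      fun z => augLag f h ρ (update x k z) y μ - γ k / 2 * ‖z‖ ^ 2)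
    (hmin : ∀ k z, augLag f h ρ (update x k (x' k)) y μ ≤ augLag f h ρ (update x k z) y μ) :
    augLag f h ρ x' y μ + ∑ k, γ k / 2 * ‖x' k - x k‖ ^ 2 ≤ augLag f h ρ x y μ :=
  Fintype.sum_add_sum_le_of_forall_update
    (fun k a => augLagBlock (f k) (h k) (ρ k) a (y k) (μ k)) _ fun k => by
      have hstrong := (strongConvexOn_iff_convex.2 (hconv k)).add_sq_norm_sub_le_of_isMinOn
        (isMinOn_univ_iff.2 (hmin k)) (mem_univ _) (mem_univ (x k))
      rw [update_eq_self, norm_sub_rev] at hstrong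
      exact hstrong

lemma augLag_step_le {γ : ι → ℝ} {x y μ x' y' μ' : ∀ k, E k}
    (hymin : ∀ k z, augLag f h ρ x (update y k (y' k)) μ ≤ augLag f h ρ x (update y k z) μ)
    (hxconv : ∀ k, ConvexOn ℝ univ
      fun z => augLag f h ρ (update x k z) y' μ - γ k / 2 * ‖z‖ ^ 2)
    (hxmin : ∀ k z, augLag f h ρ (update x k (x' k)) y' μ ≤ augLag f h ρ (update x k z) y' μ)
    (hdual : ∀ k, μ' k = μ k + ρ k • (x' k - y' k))
    (hdual_le : ∀ k, ρ k * ‖x' k - y' k‖ ^ 2 ≤ γ k / 2 * ‖x' k - x k‖ ^ 2) :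
    augLag f h ρ x' y' μ' ≤ augLag f h ρ x y μ := by
  rw [funext hdual, augLag_dual_update]
  have hy := augLag_le_of_forall_update_y hymin
  have hx := augLag_add_le_of_forall_update_x hxconv hxmin
  linarith [Finset.sum_le_sum fun k (_ : k ∈ Finset.univ) => hdual_le k]

end MultiBlock

theorem stmt5_general {K : ℕ} (E : Fin K → Type*)
    [∀ k, NormedAddCommGroup (E k)] [∀ k, InnerProductSpace ℝ (E k)]
    [∀ k, FiniteDimensional ℝ (E k)]
    (f h : ∀ k, E k → ℝ) (L ρ γ : Fin K → ℝ)
    (hdiff : ∀ k, Differentiable ℝ (f k))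
    (hsmooth : ∀ k, ∀ a a' : E k,
      ‖gradient (f k) a - gradient (f k) a'‖ ≤ L k * ‖a - a'‖)
    (hbelow : ∀ k, ∃ B : ℝ, ∀ z : E k, B ≤ f k z + h k z)
    (hρ : ∀ k, 0 < ρ k)
    (hρL : ∀ k, L k ≤ ρ k)
    (hργ : ∀ k, 2 * L k ^ 2 ≤ ρ k * γ k)
    (Lag : (∀ k, E k) → (∀ k, E k) → (∀ k, E k) → ℝ)
    (hLag : ∀ x y μ, Lag x y μ =
      ∑ k, (f k (x k) + h k (y k) + ⟪μ k, x k - y k⟫ + (ρ k / 2) * ‖x k - y k‖ ^ 2))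
    (x y μ : ℕ → ∀ k, E k)
    (hymin : ∀ (t : ℕ) (k : Fin K), ∀ z : E k,
      Lag (x t) (Function.update (y t) k (y (t + 1) k)) (μ t) ≤
        Lag (x t) (Function.update (y t) k z) (μ t))
    (hxconv : ∀ (t : ℕ) (k : Fin K), ConvexOn ℝ Set.univ
      (fun z : E k => Lag (Function.update (x t) k z) (y (t + 1)) (μ t)
        - (γ k / 2) * ‖z‖ ^ 2))
    (hxmin : ∀ (t : ℕ) (k : Fin K), ∀ z : E k,
      Lag (Function.update (x t) k (x (t + 1) k)) (y (t + 1)) (μ t) ≤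
        Lag (Function.update (x t) k z) (y (t + 1)) (μ t))
    (hopt : ∀ (t : ℕ) (k : Fin K), gradient (f k) (x (t + 1) k) + μ t k
        + ρ k • (x (t + 1) k - y (t + 1) k) = 0)
    (hdual : ∀ (t : ℕ) (k : Fin K),
      μ (t + 1) k = μ t k + ρ k • (x (t + 1) k - y (t + 1) k)) :
    (∀ t : ℕ, 1 ≤ t →
      Lag (x (t + 1)) (y (t + 1)) (μ (t + 1)) ≤ Lag (x t) (y t) (μ t)) ∧
    (∃ B : ℝ, ∀ t : ℕ, B ≤ Lag (x t) (y t) (μ t)) ∧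
    (∃ Lstar : ℝ, Filter.Tendsto (fun t => Lag (x t) (y t) (μ t))
      Filter.atTop (nhds Lstar)) := by
  obtain rfl : Lag = augLag f h ρ := funext₃ hLag
  choose B hB using hbelow
  have hμ : ∀ t k, μ (t + 1) k = -gradient (f k) (x (t + 1) k) := fun t k => by
    rw [hdual, eq_neg_iff_add_eq_zero, add_comm, ← add_assoc, hopt]
  have hlower : ∀ t, 1 ≤ t → ∑ k, B k ≤ augLag f h ρ (x t) (y t) (μ t) := by
    intro t ht
    obtain ⟨s, rfl⟩ := Nat.exists_eq_add_of_le' ht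
    refine Finset.sum_le_sum fun k _ => (hB k (y (s + 1) k)).trans ?_
    rw [hμ]
    exact le_augLagBlock_neg_gradient (hdiff k) (hsmooth k) (hρL k) (h k) _ _
  have hdesc : ∀ t, 1 ≤ t →
      augLag f h ρ (x (t + 1)) (y (t + 1)) (μ (t + 1)) ≤ augLag f h ρ (x t) (y t) (μ t) := by
    intro t ht
    obtain ⟨s, rfl⟩ := Nat.exists_eq_add_of_le' ht
    refine augLag_step_le (hymin _) (hxconv _) (hxmin _) (hdual _) fun k =>
      mul_sq_le_of_mul_le (hρ k) (norm_nonneg _) ?_ (hργ k)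
    -- the dual step is the change of gradient, because `μ^{t} = -∇f(x^{t})` for `t ≥ 1`
    have hstep : ρ k • (x (s + 2) k - y (s + 2) k) =
        gradient (f k) (x (s + 1) k) - gradient (f k) (x (s + 2) k) := by
      have := hdual (s + 1) k
      rw [hμ, hμ] at this
      rw [← sub_eq_iff_eq_add'.2 this]
      abel
    calc ρ k * ‖x (s + 2) k - y (s + 2) k‖ = ‖ρ k • (x (s + 2) k - y (s + 2) k)‖ := by
          rw [norm_smul, Real.norm_of_nonneg (hρ k).le]
      _ ≤ L k * ‖x (s + 2) k - x (s + 1) k‖ := by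
          rw [hstep, norm_sub_rev (x _ k)]
          exact hsmooth k _ _
  refine ⟨hdesc, ⟨min (augLag f h ρ (x 0) (y 0) (μ 0)) (∑ k, B k), fun t => ?_⟩,
    exists_tendsto_of_eventually_antitone_of_bddBelow hdesc hlower⟩
  rcases Nat.eq_zero_or_pos t with rfl | ht
  · exact min_le_left _ _
  · exact (min_le_right _ _).trans (hlower t ht)

/-- In the multi-block augmented Lagrangian setting, if each `f_k` is `L_k`-smooth,
each `h_k` is differentiable, each `f_k + h_k` is bounded below, `ρ_k ≥ L_k`, `γ̃_k ≥ 0`,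
`ρ_k γ_k ≥ 2 L_k²`, and the per-iteration (exact strongly convex block minimization and dual
update) hypotheses hold, then the sequence `𝐋^t = L({x^t},{y^t},{μ^t})` is monotonically
decreasing (for `t ≥ 1`), bounded below, and convergent to a finite limit. -/
theorem stmt5 {K : ℕ} (E : Fin K → Type*)
    [∀ k, NormedAddCommGroup (E k)] [∀ k, InnerProductSpace ℝ (E k)]
    [∀ k, FiniteDimensional ℝ (E k)]
    (f h : ∀ k, E k → ℝ) (L ρ γ γ' : Fin K → ℝ)
    (hdiff : ∀ k, Differentiable ℝ (f k))
    (hsmooth : ∀ k, ∀ a a' : E k,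
      ‖gradient (f k) a - gradient (f k) a'‖ ≤ L k * ‖a - a'‖)
    (hdiffh : ∀ k, Differentiable ℝ (h k))
    (hbelow : ∀ k, ∃ B : ℝ, ∀ z : E k, B ≤ f k z + h k z)
    (hρ : ∀ k, 0 < ρ k)
    (hρL : ∀ k, L k ≤ ρ k)
    (hγ' : ∀ k, 0 ≤ γ' k)
    (hργ : ∀ k, 2 * L k ^ 2 ≤ ρ k * γ k)
    (Lag : (∀ k, E k) → (∀ k, E k) → (∀ k, E k) → ℝ)
    (hLag : ∀ x y μ, Lag x y μ =
      ∑ k, (f k (x k) + h k (y k) + ⟪μ k, x k - y k⟫ + (ρ k / 2) * ‖x k - y k‖ ^ 2))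
    (x y μ : ℕ → ∀ k, E k)
    (hyconv : ∀ (t : ℕ) (k : Fin K), ConvexOn ℝ Set.univ
      (fun z : E k => Lag (x t) (Function.update (y t) k z) (μ t) - (γ' k / 2) * ‖z‖ ^ 2))
    (hymin : ∀ (t : ℕ) (k : Fin K), ∀ z : E k,
      Lag (x t) (Function.update (y t) k (y (t + 1) k)) (μ t) ≤
        Lag (x t) (Function.update (y t) k z) (μ t))
    (hxconv : ∀ (t : ℕ) (k : Fin K), ConvexOn ℝ Set.univ
      (fun z : E k => Lag (Function.update (x t) k z) (y (t + 1)) (μ t)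
        - (γ k / 2) * ‖z‖ ^ 2))
    (hxmin : ∀ (t : ℕ) (k : Fin K), ∀ z : E k,
      Lag (Function.update (x t) k (x (t + 1) k)) (y (t + 1)) (μ t) ≤
        Lag (Function.update (x t) k z) (y (t + 1)) (μ t))
    (hopt : ∀ (t : ℕ) (k : Fin K), gradient (f k) (x (t + 1) k) + μ t k
        + ρ k • (x (t + 1) k - y (t + 1) k) = 0)
    (hdual : ∀ (t : ℕ) (k : Fin K),
      μ (t + 1) k = μ t k + ρ k • (x (t + 1) k - y (t + 1) k)) :
    (∀ t : ℕ, 1 ≤ t →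
      Lag (x (t + 1)) (y (t + 1)) (μ (t + 1)) ≤ Lag (x t) (y t) (μ t)) ∧
    (∃ B : ℝ, ∀ t : ℕ, B ≤ Lag (x t) (y t) (μ t)) ∧
    (∃ Lstar : ℝ, Filter.Tendsto (fun t => Lag (x t) (y t) (μ t))
      Filter.atTop (nhds Lstar)) :=
  stmt5_general E f h L ρ γ hdiff hsmooth hbelow hρ hρL hργ Lag hLag x y μ hymin hxconv hxmin hopt
    hdual
end

section
/- Let U ∈ ℝ^{I×R}, V ∈ ℝ^{J×R}, X ∈ ℝ^{I×J}, c ∈ ℝ^R, ρ > 0, and let M = V ⊙ U ∈ ℝ^{IJ×R} be the column-wise Khatri–Rao product. Then (VᵀV) ∗ (UᵀU) + (ρ/2) I_R is positive definite, and the function s ↦ ‖vec(X) − M s‖₂² + (ρ/2)‖s − c‖₂² on ℝ^R has the unique minimizer s* = ( (VᵀV) ∗ (UᵀU) + (ρ/2) I_R )^{-1} ( diag(Uᵀ X V) + (ρ/2) c ), where diag(Uᵀ X V) is the vector of diagonal entries of Uᵀ X V. -/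
/-!
The Gram matrix of a Khatri–Rao product is the Hadamard product of the Gram matrices,
`(V ⊙ U)ᵀ (V ⊙ U) = (VᵀV) ∗ (UᵀU)`, and `(V ⊙ U)ᵀ vec X = diag (Uᵀ X V)`. So the problem is a
ridge regression `‖b - A s‖² + μ ‖s - c‖²` with `Q = AᵀA + μ I` positive definite, and for the
solution `t` of the normal equations `Q t = Aᵀ b + μ c` completing the square gives
`f s = f t + (s - t)ᵀ Q (s - t)`.
-/

open Matrix

namespace Matrix

variable {m n k R : Type*} [Fintype m] [Fintype n]

def khatriRao [Mul R] (V : Matrix n k R) (U : Matrix m k R) : Matrix (n × m) k R :=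
  fun p r => V p.1 r * U p.2 r

theorem khatriRao_transpose_mul_self [CommSemiring R] (V : Matrix n k R) (U : Matrix m k R) :
    (khatriRao V U)ᵀ * khatriRao V U = hadamard (Vᵀ * V) (Uᵀ * U) := by
  ext r r'
  simp only [khatriRao, mul_apply, transpose_apply, hadamard_apply, Fintype.sum_prod_type,
    Finset.sum_mul_sum]
  exact Finset.sum_congr rfl fun _ _ => Finset.sum_congr rfl fun _ _ => by ring

theorem khatriRao_transpose_mulVec_vec [CommSemiring R] (V : Matrix n k R) (U : Matrix m k R)
    (X : Matrix m n R) (r : k) : ((khatriRao V U)ᵀ *ᵥ vec X) r = (Uᵀ * X * V) r r := by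
  simp only [khatriRao, mulVec, dotProduct, vec, mul_apply, transpose_apply, Fintype.sum_prod_type,
    Finset.sum_mul]
  exact Finset.sum_congr rfl fun _ _ => Finset.sum_congr rfl fun _ _ => by ring

def ridgeObjective (A : Matrix m n ℝ) (b : m → ℝ) (μ : ℝ) (c s : n → ℝ) : ℝ :=
  (b - A *ᵥ s) ⬝ᵥ (b - A *ᵥ s) + μ * ((s - c) ⬝ᵥ (s - c))

variable [DecidableEq n]

theorem posDef_transpose_mul_self_add_smul_one (A : Matrix m n ℝ) {μ : ℝ} (hμ : 0 < μ) :
    (Aᵀ * A + μ • (1 : Matrix n n ℝ)).PosDef :=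
  PosDef.posSemidef_add (by simpa using posSemidef_conjTranspose_mul_self A) (PosDef.one.smul hμ)

theorem ridgeObjective_eq_add_dotProduct_mulVec (A : Matrix m n ℝ) (b : m → ℝ) (μ : ℝ)
    {c t : n → ℝ} (ht : (Aᵀ * A + μ • (1 : Matrix n n ℝ)) *ᵥ t = Aᵀ *ᵥ b + μ • c) (s : n → ℝ) :
    ridgeObjective A b μ c s = ridgeObjective A b μ c t
      + (s - t) ⬝ᵥ ((Aᵀ * A + μ • (1 : Matrix n n ℝ)) *ᵥ (s - t)) := by
  set d := s - t
  have hs : s = t + d := by simp [d]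
  have hgrad : (b - A *ᵥ t) ⬝ᵥ (A *ᵥ d) = μ * ((t - c) ⬝ᵥ d) := by
    have hresidual : Aᵀ *ᵥ (b - A *ᵥ t) = μ • (t - c) := by
      rw [add_mulVec, ← mulVec_mulVec, smul_mulVec, one_mulVec] at ht
      rw [mulVec_sub, smul_sub]
      linear_combination -ht
    rw [dotProduct_mulVec, ← mulVec_transpose, hresidual, smul_dotProduct, smul_eq_mul]
  simp only [ridgeObjective, hs, add_mulVec, ← mulVec_mulVec, smul_mulVec, one_mulVec,
    mulVec_add, dotProduct_add, dotProduct_mulVec _ Aᵀ, ← mulVec_transpose,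
    transpose_transpose]
  rw [sub_add_eq_sub_sub, add_sub_right_comm t d c]
  generalize b - A *ᵥ t = e, t - c = f, A *ᵥ d = w at hgrad ⊢
  simp only [sub_dotProduct, dotProduct_sub, add_dotProduct, dotProduct_add, dotProduct_smul,
    smul_eq_mul, dotProduct_comm w e, dotProduct_comm d f]
  linear_combination (-2) * hgrad

theorem ridgeObjective_lt_of_ne (A : Matrix m n ℝ) (b : m → ℝ) {μ : ℝ} (hμ : 0 < μ)
    {c t : n → ℝ} (ht : (Aᵀ * A + μ • (1 : Matrix n n ℝ)) *ᵥ t = Aᵀ *ᵥ b + μ • c)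
    {s : n → ℝ} (hs : s ≠ t) : ridgeObjective A b μ c t < ridgeObjective A b μ c s := by
  rw [ridgeObjective_eq_add_dotProduct_mulVec A b μ ht s, lt_add_iff_pos_right]
  simpa using (posDef_transpose_mul_self_add_smul_one A hμ).dotProduct_mulVec_pos
    (sub_ne_zero.mpr hs)

end Matrix

/-- `(VᵀV) ∗ (UᵀU) + (ρ/2) I` is positive definite, and
`s ↦ ‖vec(X) − M s‖₂² + (ρ/2)‖s − c‖₂²` (with `M = V ⊙ U` the column-wise Khatri–Rao
product) has the unique minimizer
`s* = ((VᵀV) ∗ (UᵀU) + (ρ/2) I)⁻¹ (diag(Uᵀ X V) + (ρ/2) c)`. -/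
theorem stmt15 {I J R : ℕ} (U : Matrix (Fin I) (Fin R) ℝ) (V : Matrix (Fin J) (Fin R) ℝ)
    (X : Matrix (Fin I) (Fin J) ℝ) (c : Fin R → ℝ) (ρ : ℝ) (hρ : 0 < ρ)
    (M : Matrix (Fin J × Fin I) (Fin R) ℝ)
    (hM : ∀ (j : Fin J) (i : Fin I) (r : Fin R), M (j, i) r = V j r * U i r)
    (vecX : Fin J × Fin I → ℝ)
    (hvec : ∀ (j : Fin J) (i : Fin I), vecX (j, i) = X i j)
    (φ : (Fin R → ℝ) → ℝ)
    (hφ : ∀ s : Fin R → ℝ,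
      φ s = (∑ p : Fin J × Fin I, (vecX p - M.mulVec s p) ^ 2)
        + (ρ / 2) * ∑ r : Fin R, (s r - c r) ^ 2)
    (sstar : Fin R → ℝ)
    (hsstar : sstar = (Matrix.hadamard (Vᵀ * V) (Uᵀ * U)
        + (ρ / 2) • (1 : Matrix (Fin R) (Fin R) ℝ))⁻¹.mulVec
      (fun r => (Uᵀ * X * V) r r + (ρ / 2) * c r)) :
    (Matrix.hadamard (Vᵀ * V) (Uᵀ * U)
      + (ρ / 2) • (1 : Matrix (Fin R) (Fin R) ℝ)).PosDef ∧
    ∀ s : Fin R → ℝ, s ≠ sstar → φ sstar < φ s := by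
  obtain rfl : M = khatriRao V U := by ext ⟨j, i⟩ r; exact hM j i r
  obtain rfl : vecX = vec X := by ext ⟨j, i⟩; exact hvec j i
  rw [← khatriRao_transpose_mul_self] at hsstar ⊢
  have hPD := posDef_transpose_mul_self_add_smul_one (khatriRao V U) (half_pos hρ)
  have hnormal : ((khatriRao V U)ᵀ * khatriRao V U + (ρ / 2) • 1) *ᵥ sstar
      = (khatriRao V U)ᵀ *ᵥ vec X + (ρ / 2) • c := by
    rw [hsstar, mulVec_mulVec, mul_nonsing_inv _ ((isUnit_iff_isUnit_det _).mp hPD.isUnit),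
      one_mulVec]
    ext r
    simp [khatriRao_transpose_mulVec_vec]
  have hφ_eq : φ = ridgeObjective (khatriRao V U) (vec X) (ρ / 2) c := by
    ext s
    simp [hφ, ridgeObjective, dotProduct, sq]
  exact ⟨hPD, fun s hs => hφ_eq ▸ ridgeObjective_lt_of_ne _ _ (half_pos hρ) hnormal hs⟩
end
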